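/- In g(μ,ν), for all i, j ∈ ℤ, r, s ∈ ℤ^N and 1 ≤ a, b ≤ N, the following commutator identities hold: (i) [t₀^i t^r d̃_a, t₀^j t^s d̃_b] = s_a t₀^{i+j}t^{r+s}d̃_b − r_b t₀^{i+j}t^{r+s}d̃_a + (μ s_a r_b + ν r_a s_b)·j·t₀^{i+j}t^{r+s}k₀ + (μ s_a r_b + ν r_a s_b) Σ_{p=1}^N s_p t₀^{i+j}t^{r+s}k_p; (ii) [t₀^i t^r d̃₀, t₀^j t^s d̃_b] = −j t₀^{i+j}t^{r+s}d̃_b − r_b t₀^{i+j}t^{r+s}d̃₀ − (μ r_b(j−1) + ν s_b(i+1))·j·t₀^{i+j}t^{r+s}k₀ − (μ r_b j + ν s_b(i+1)) Σ_{p=1}^N s_p t₀^{i+j}t^{r+s}k_p; (iii) [t₀^i t^r d̃₀, t₀^j t^s d̃₀] = (i−j) t₀^{i+j}t^{r+s}d̃₀ + (μ+ν) j(j+1)(i+1) t₀^{i+j}t^{r+s}k₀ + (μ+ν)(j+1)(i+1) Σ_{p=1}^N s_p t₀^{i+j}t^{r+s}k_p. -/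
import Mathlib


namespace ToroidalPaper

noncomputable section

/-- multi-indices r ∈ ℤ^{N+1} -/
abbrev Idx (N : ℕ) := Fin (N + 1) → ℤ

/-- The model for the 1-forms Ω¹_R: the free module on k₀,…,k_N over R,
written in the monomial basis t^r k_p. -/
abbrev OmegaR (N : ℕ) := Idx N →₀ (Fin (N + 1) → ℂ)

/-- The subspace d(R) ⊆ Ω¹_R of exact forms: d(t^r) = Σ_p r_p t^r k_p. -/
def dR (N : ℕ) : Submodule ℂ (OmegaR N) :=
  Submodule.span ℂ {w : OmegaR N | ∃ r : Idx N, w = Finsupp.single r fun p => (r p : ℂ)}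

/-- K = Ω¹_R / d(R) -/
abbrev Kmod (N : ℕ) := OmegaR N ⧸ dR N

variable (N : ℕ) (g : Type) [LieRing g] [LieAlgebra ℂ g]

/-- The underlying vector space of the full toroidal Lie algebra:
(R ⊗ ġ) ⊕ K ⊕ D, where R ⊗ ġ is modeled as `Idx N →₀ g` (coefficient of t^r)
and D as `Idx N →₀ (Fin (N+1) → ℂ)` (coefficients of t^r d_p). -/
abbrev Carrier := (Idx N →₀ g) × Kmod N × (Idx N →₀ (Fin (N + 1) → ℂ))

/-- A realization of the vector space (R⊗ġ) ⊕ K ⊕ D as a Lie algebra: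
a Lie algebra `G` together with a linear identification with the model. -/
structure Tor where
  G : Type
  [instLieRing : LieRing G]
  [instLieAlgebra : LieAlgebra ℂ G]
  e : G ≃ₗ[ℂ] Carrier N g

attribute [instance] Tor.instLieRing Tor.instLieAlgebra

namespace Tor

variable {N g}
variable (T : Tor N g)

/-- the element t^r ⊗ x of R ⊗ ġ -/
def tg (r : Idx N) (x : g) : T.G := T.e.symm (Finsupp.single r x, 0, 0)

/-- the element t^r k_p of K -/
def k (r : Idx N) (p : Fin (N + 1)) : T.G :=
  T.e.symm (0, Submodule.Quotient.mk (p := dR N) (Finsupp.single r (Pi.single p 1)), 0)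

/-- the element t^r d_p of D -/
def d (r : Idx N) (p : Fin (N + 1)) : T.G :=
  T.e.symm (0, 0, Finsupp.single r (Pi.single p 1))

/-- t^m · d(t^r) = Σ_p r_p t^{r+m} k_p -/
def kSum (r m : Idx N) : T.G := ∑ p : Fin (N + 1), (r p : ℂ) • T.k (r + m) p

/-- The bracket relations of the full toroidal Lie algebra g(μ,ν). -/
structure IsToroidal (B : g →ₗ[ℂ] g →ₗ[ℂ] ℂ) (μ ν : ℂ) : Prop where
  br_gg : ∀ (r m : Idx N) (x y : g),
    ⁅T.tg r x, T.tg m y⁆ = T.tg (r + m) ⁅x, y⁆ + B x y • T.kSum r m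
  br_kg : ∀ (r m : Idx N) (p : Fin (N + 1)) (x : g), ⁅T.k r p, T.tg m x⁆ = 0
  br_kk : ∀ (r m : Idx N) (p q : Fin (N + 1)), ⁅T.k r p, T.k m q⁆ = 0
  br_dg : ∀ (r m : Idx N) (a : Fin (N + 1)) (x : g),
    ⁅T.d r a, T.tg m x⁆ = (m a : ℂ) • T.tg (r + m) x
  br_dk : ∀ (r m : Idx N) (a b : Fin (N + 1)),
    ⁅T.d r a, T.k m b⁆ = (m a : ℂ) • T.k (r + m) b
      + (if a = b then (1 : ℂ) else 0) • T.kSum r m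
  br_dd : ∀ (r m : Idx N) (a b : Fin (N + 1)),
    ⁅T.d r a, T.d m b⁆ = (m a : ℂ) • T.d (r + m) b - (r b : ℂ) • T.d (r + m) a
      + (μ * (m a : ℂ) * (r b : ℂ) + ν * (r a : ℂ) * (m b : ℂ)) •
          (∑ p : Fin (N + 1), (m p : ℂ) • T.k (r + m) p)

end Tor

end

end ToroidalPaper

namespace ToroidalPaper

noncomputable section

/-- the multi-index of t₀^j t^r, r ∈ ℤ^N -/
def mIdx {N : ℕ} (j : ℤ) (r : Fin N → ℤ) : Idx N := Fin.cons j r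

namespace Tor

variable {N : ℕ} {g : Type} [LieRing g] [LieAlgebra ℂ g] (T : Tor N g)

/-- t₀^j t^r d̃_p = t₀^j t^r d_p − ν r_p t₀^j t^r k₀ (p = 1,…,N) -/
def dT (ν : ℂ) (j : ℤ) (r : Fin N → ℤ) (p : Fin N) : T.G :=
  T.d (mIdx j r) p.succ - (ν * (r p : ℂ)) • T.k (mIdx j r) 0

/-- t₀^j t^r d̃₀ = −t₀^j t^r d₀ + (μ+ν)(j+1/2) t₀^j t^r k₀ -/
def dT0 (μ ν : ℂ) (j : ℤ) (r : Fin N → ℤ) : T.G :=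
  - T.d (mIdx j r) 0 + ((μ + ν) * ((j : ℂ) + 1 / 2)) • T.k (mIdx j r) 0

end Tor

section Aux

variable {N : ℕ} {g : Type} [LieRing g] [LieAlgebra ℂ g] (T : Tor N g)

lemma k_rel' (X : Idx N) : ∑ p : Fin (N+1), (X p : ℂ) • T.k X p = 0 := by
  set L : (Fin (N+1) → ℂ) →ₗ[ℂ] T.G :=
    T.e.symm.toLinearMap ∘ₗ LinearMap.inr ℂ (Idx N →₀ g) (Kmod N × (Idx N →₀ (Fin (N+1) → ℂ)))
      ∘ₗ LinearMap.inl ℂ (Kmod N) (Idx N →₀ (Fin (N+1) → ℂ))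
      ∘ₗ (dR N).mkQ ∘ₗ Finsupp.lsingle X with hL
  have hk : ∀ p, T.k X p = L (Pi.single p 1) := fun p => rfl
  have h1 : ∑ p : Fin (N+1), (X p : ℂ) • T.k X p = L (fun q => (X q : ℂ)) := by
    simp_rw [hk, ← map_smul, ← map_sum]
    congr 1
    have : ∀ p : Fin (N+1), (X p : ℂ) • (Pi.single p (1:ℂ) : Fin (N+1) → ℂ)
        = Pi.single p ((X p : ℂ)) := by
      intro p; rw [← Pi.single_smul, smul_eq_mul, mul_one]
    simp_rw [this]
    exact funext fun q => by simpa using congrFun (Finset.univ_sum_single (fun q => (X q : ℂ))) q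
  rw [h1]
  have h2 : ((dR N).mkQ (Finsupp.single X (fun q => (X q : ℂ)))) = 0 := by
    rw [Submodule.mkQ_apply, Submodule.Quotient.mk_eq_zero]
    exact Submodule.subset_span ⟨X, rfl⟩
  show T.e.symm (0, (dR N).mkQ (Finsupp.lsingle X (fun q => (X q : ℂ))), 0) = 0
  rw [show (Finsupp.lsingle X (fun q => (X q:ℂ)) : OmegaR N) = Finsupp.single X (fun q => (X q:ℂ)) from rfl,
    h2]
  simp

end Aux

/-- the commutator identities (4.6), (4.7), (4.8) in g(μ,ν). -/
theorem statement9 (N : ℕ) (hN : 1 ≤ N) (g : Type) [LieRing g] [LieAlgebra ℂ g]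
    [FiniteDimensional ℂ g] [LieAlgebra.IsSimple ℂ g]
    (B : g →ₗ[ℂ] g →ₗ[ℂ] ℂ)
    (hBsymm : ∀ x y : g, B x y = B y x)
    (hBnondeg : ∀ x : g, (∀ y : g, B x y = 0) → x = 0)
    (hBinv : ∀ x y z : g, B ⁅x, y⁆ z = B x ⁅y, z⁆)
    (μ ν : ℂ) (T : Tor N g) (hT : T.IsToroidal B μ ν)
    (i j : ℤ) (r s : Fin N → ℤ) (a b : Fin N) :
    (⁅T.dT ν i r a, T.dT ν j s b⁆ =
      (s a : ℂ) • T.dT ν (i + j) (r + s) b - (r b : ℂ) • T.dT ν (i + j) (r + s) a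
      + ((μ * (s a : ℂ) * (r b : ℂ) + ν * (r a : ℂ) * (s b : ℂ)) * (j : ℂ)) •
          T.k (mIdx (i + j) (r + s)) 0
      + (μ * (s a : ℂ) * (r b : ℂ) + ν * (r a : ℂ) * (s b : ℂ)) •
          ∑ p : Fin N, (s p : ℂ) • T.k (mIdx (i + j) (r + s)) p.succ) ∧
    (⁅T.dT0 μ ν i r, T.dT ν j s b⁆ =
      (-(j : ℂ)) • T.dT ν (i + j) (r + s) b - (r b : ℂ) • T.dT0 μ ν (i + j) (r + s)
      - ((μ * (r b : ℂ) * ((j : ℂ) - 1) + ν * (s b : ℂ) * ((i : ℂ) + 1)) * (j : ℂ)) •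
          T.k (mIdx (i + j) (r + s)) 0
      - (μ * (r b : ℂ) * (j : ℂ) + ν * (s b : ℂ) * ((i : ℂ) + 1)) •
          ∑ p : Fin N, (s p : ℂ) • T.k (mIdx (i + j) (r + s)) p.succ) ∧
    (⁅T.dT0 μ ν i r, T.dT0 μ ν j s⁆ =
      ((i : ℂ) - (j : ℂ)) • T.dT0 μ ν (i + j) (r + s)
      + ((μ + ν) * (j : ℂ) * ((j : ℂ) + 1) * ((i : ℂ) + 1)) •
          T.k (mIdx (i + j) (r + s)) 0
      + ((μ + ν) * ((j : ℂ) + 1) * ((i : ℂ) + 1)) •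
          ∑ p : Fin N, (s p : ℂ) • T.k (mIdx (i + j) (r + s)) p.succ) := by
  have hm0 : ∀ (c : ℤ) (v : Fin N → ℤ), (mIdx c v) 0 = c := fun _ _ => Fin.cons_zero _ _
  have hms : ∀ (c : ℤ) (v : Fin N → ℤ) (q : Fin N), (mIdx c v) q.succ = v q :=
    by intro c v q; simp [mIdx]
  have hRS : mIdx i r + mIdx j s = mIdx (i + j) (r + s) := by
    funext p
    refine Fin.cases ?_ (fun q => ?_) p <;> simp [mIdx]
  have hSR : mIdx j s + mIdx i r = mIdx (i + j) (r + s) := by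
    funext p
    refine Fin.cases ?_ (fun q => ?_) p <;> simp [mIdx] <;> ring
  have kd : ∀ (R M : Idx N) (p q : Fin (N+1)), ⁅T.k R p, T.d M q⁆
      = -((R q : ℂ) • T.k (M + R) p) - (if q = p then (1:ℂ) else 0) • T.kSum M R := by
    intro R M p q
    rw [← lie_skew, hT.br_dk]
    abel
  -- the relation Σr = -(i+j)k0 - Σs in K
  have hrsum : (∑ p : Fin N, ((r p : ℤ) : ℂ) • T.k (mIdx (i+j) (r+s)) p.succ)
      = -(((i : ℤ) : ℂ) • T.k (mIdx (i+j) (r+s)) 0 + ((j : ℤ) : ℂ) • T.k (mIdx (i+j) (r+s)) 0)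
        - ∑ p : Fin N, ((s p : ℤ) : ℂ) • T.k (mIdx (i+j) (r+s)) p.succ := by
    have h := k_rel' T (mIdx (i+j) (r+s))
    rw [Fin.sum_univ_succ] at h
    simp only [hm0, hms, Pi.add_apply, Int.cast_add, add_smul, Finset.sum_add_distrib] at h
    rw [eq_sub_iff_add_eq]
    exact eq_neg_of_add_eq_zero_right h
  refine ⟨?_, ?_, ?_⟩
  · -- part (i)
    simp only [Tor.dT, lie_sub, sub_lie, lie_smul, smul_lie, hT.br_dd, hT.br_dk, kd, hT.br_kk,
      hRS, hSR]
    simp only [Fin.succ_ne_zero, if_false, Fin.succ_ne_zero a, zero_smul, smul_zero,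
      add_zero, sub_zero, zero_sub, if_neg (Fin.succ_ne_zero b).symm,
      if_neg (Ne.symm (Fin.succ_ne_zero a))]
    rw [Fin.sum_univ_succ]
    simp only [hm0, hms]
    match_scalars <;> (push_cast [Pi.add_apply]; ring)
  · -- part (ii)
    simp only [Tor.dT, Tor.dT0, neg_add, lie_sub, sub_lie, lie_smul, smul_lie, lie_add, add_lie,
      lie_neg, neg_lie, hT.br_dd, hT.br_dk, kd, hT.br_kk, hRS, hSR, Tor.kSum]
    simp only [Fin.succ_ne_zero, if_false, if_pos rfl, if_neg (Fin.succ_ne_zero b),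
      if_neg (Ne.symm (Fin.succ_ne_zero b)), zero_smul, smul_zero, add_zero, sub_zero, one_smul]
    simp only [Fin.sum_univ_succ, hm0, hms]
    rw [hrsum]
    match_scalars <;> (push_cast [Pi.add_apply]; ring)
  · -- part (iii)
    simp only [Tor.dT0, neg_add, lie_sub, sub_lie, lie_smul, smul_lie, lie_add, add_lie,
      lie_neg, neg_lie, hT.br_dd, hT.br_dk, kd, hT.br_kk, hRS, hSR, Tor.kSum]
    simp only [if_pos rfl, zero_smul, smul_zero, add_zero, sub_zero, one_smul]
    simp only [Fin.sum_univ_succ, hm0, hms]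
    rw [hrsum]
    match_scalars <;> (push_cast [Pi.add_apply]; ring)


end

end ToroidalPaper
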